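/- Let p, M ≥ 1 and let L : ℝ^{M×p} → ℝ be convex and differentiable. Let w_{m,m'} ≥ 0 be symmetric weights and define R(x) = ρ₁‖x‖₁ + ρ₂·Σ_{1≤m<m'≤M} w_{m,m'}‖x^(m) − x^(m')‖₁, where ρ₂ > 0 and ρ₁ = ρ₂/√M. Let θ ∈ ℝ^{M×p} with support S = {(j,m) : θ^(m)_j ≠ 0} of size |S| ≤ d*·M and dissimilarity set S̃ = {(j,m) : θ^(m)_j ≠ θ^(m')_j for some m'} of size |S̃| ≤ r*. Suppose θ̂ ∈ ℝ^{M×p} satisfies L(θ̂) + R(θ̂) ≤ L(θ) + R(θ), set Δ = θ̂ − θ, and assume (i) 2‖∇L(θ)‖_∞ ≤ ρ₁ and (ii) the restricted strong convexity bound L(θ̂) − L(θ) − ⟨∇L(θ), Δ⟩ ≥ η‖Δ‖₂² holds for some η > 0. Then ‖Δ‖₂ ≤ (ρ₂/η)(3√(d*) + 2φ√(r*)), where φ = max_{1≤m≤M} Σ_{m'≠m} w_{m,m'}. -/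

import Mathlib

/-!
With `Δ = θhat - θ`, optimality of `θhat` and restricted strong convexity give
`η ‖Δ‖² ≤ ρ₁ (‖θ‖₁ - ‖θhat‖₁) + ρ₂ (F θ - F θhat) - ⟪∇L θ, Δ⟫`, where `F` is the fusion penalty.
The gradient term is at most `ρ₁/2 ‖Δ‖₁`, and the ℓ¹ difference is at most `‖Δ_S‖₁ - ‖Δ_Sᶜ‖₁`,
which absorbs the off-support half of it. The fusion difference only involves coordinates in `S̃`,
and after symmetrizing the pair sum each row carries total weight at most `φ`. Cauchy–Schwarz
turns `‖Δ_S‖₁` and `‖Δ_S̃‖₁` into `√(d* M) ‖Δ‖` and `√r* ‖Δ‖`, and dividing by `η ‖Δ‖` gives the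
bound, even with the constants `3/2` and `1` in place of `3` and `2`.
-/

open Finset

section Lasso

variable {ι : Type*} [Fintype ι]

theorem sum_abs_le_sqrt_card_mul_norm (x : EuclideanSpace ℝ ι) (T : Finset ι) :
    ∑ q ∈ T, |x q| ≤ √(#T : ℝ) * ‖x‖ :=
  calc ∑ q ∈ T, |x q| = ∑ q ∈ T, 1 * |x q| := by simp only [one_mul]
    _ ≤ √(∑ q ∈ T, (1 : ℝ) ^ 2) * √(∑ q ∈ T, |x q| ^ 2) := Real.sum_mul_le_sqrt_mul_sqrt _ _ _
    _ ≤ √(#T : ℝ) * ‖x‖ := by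
      rw [EuclideanSpace.norm_eq]
      simp only [one_pow, sum_const, nsmul_eq_mul, mul_one, Real.norm_eq_abs]
      gcongr
      exact subset_univ T

theorem abs_inner_le_mul_sum_abs {g : EuclideanSpace ℝ ι} {c : ℝ} (hg : ∀ q, |g q| ≤ c)
    (x : EuclideanSpace ℝ ι) : |inner ℝ g x| ≤ c * ∑ q, |x q| := by
  rw [PiLp.inner_apply, mul_sum]
  refine (abs_sum_le_sum_abs _ _).trans (sum_le_sum fun q _ => ?_)
  rw [Real.inner_apply, abs_mul]
  exact mul_le_mul_of_nonneg_right (hg q) (abs_nonneg _)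

theorem sum_abs_sub_sum_abs_le (θ θhat : EuclideanSpace ℝ ι) :
    ∑ q, |θ q| - ∑ q, |θhat q| ≤
      ∑ q ∈ univ.filter (θ · ≠ 0), |(θhat - θ) q| - ∑ q ∈ univ.filter (θ · = 0), |(θhat - θ) q| := by
  have h : ∀ q, |θ q| - |θhat q| ≤ if θ q ≠ 0 then |(θhat - θ) q| else -|(θhat - θ) q| := by
    intro q
    split_ifs with hq
    · rw [PiLp.sub_apply, abs_sub_comm]
      exact abs_sub_abs_le_abs_sub _ _
    · simp [not_not.mp hq]
  calc _ = ∑ q, (|θ q| - |θhat q|) := (sum_sub_distrib _ _).symm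
    _ ≤ _ := sum_le_sum fun q _ => h q
    _ = _ := by simp only [sum_ite, sum_neg_distrib, not_not, sub_eq_add_neg]

end Lasso

theorem le_div_of_mul_sq_le_mul {a A η : ℝ} (ha : 0 ≤ a) (hA : 0 ≤ A) (hη : 0 < η)
    (h : η * a ^ 2 ≤ A * a) : a ≤ A / η := by
  rw [le_div_iff₀' hη]
  rcases ha.eq_or_lt with rfl | ha
  · simpa using hA
  · nlinarith

theorem abs_sub_sub_abs_sub_le (a b a' b' : ℝ) : |a - b| - |a' - b'| ≤ |a' - a| + |b' - b| :=
  calc |a - b| - |a' - b'| ≤ |(a - b) - (a' - b')| := abs_sub_abs_le_abs_sub _ _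
    _ = |(a' - a) - (b' - b)| := by rw [← abs_neg]; ring_nf
    _ ≤ |a' - a| + |b' - b| := abs_sub _ _

section Fusion

variable {κ ι : Type*} [Fintype κ] [LinearOrder κ] [Fintype ι]

def fusionPenalty (w : κ → κ → ℝ) (x : EuclideanSpace ℝ (κ × ι)) : ℝ :=
  ∑ m : κ, ∑ m' ∈ univ.filter (fun m' => m < m'), w m m' * ∑ j, |x (m, j) - x (m', j)|

open Classical in
noncomputable def dissimilaritySet (θ : EuclideanSpace ℝ (κ × ι)) : Finset (κ × ι) :=
  univ.filter fun q => ∃ m', θ q ≠ θ (m', q.2)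

theorem sum_sum_lt_mul_add_eq {w : κ → κ → ℝ} (hw : ∀ m m', w m m' = w m' m) (t : κ → ℝ) :
    ∑ m, ∑ m' ∈ univ.filter (m < ·), w m m' * (t m + t m') =
      ∑ m, (∑ m' ∈ univ.filter (· ≠ m), w m m') * t m := by
  have swap : ∑ m, ∑ m', (if m < m' then w m m' * t m' else 0) =
      ∑ m, ∑ m', (if m' < m then w m m' * t m else 0) := by
    rw [sum_comm]
    simp_rw [hw]
  have split : ∀ m m', (if m' ≠ m then w m m' * t m else 0) =
      (if m < m' then w m m' * t m else 0) + (if m' < m then w m m' * t m else 0) := by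
    intro m m'
    rcases lt_trichotomy m m' with h | rfl | h
    · simp [h, h.ne', h.not_gt]
    · simp
    · simp [h, h.ne, h.not_gt]
  simp only [sum_filter, sum_mul, ite_mul, zero_mul, split, sum_add_distrib, ← swap, mul_add]

theorem fusionPenalty_sub_le {w : κ → κ → ℝ} (hw_nonneg : ∀ m m', m ≠ m' → 0 ≤ w m m')
    (hw_symm : ∀ m m', w m m' = w m' m) {φ : ℝ}
    (hφ : ∀ m, ∑ m' ∈ univ.filter (· ≠ m), w m m' ≤ φ) (θ θhat : EuclideanSpace ℝ (κ × ι)) :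
    fusionPenalty w θ - fusionPenalty w θhat ≤
      φ * ∑ q ∈ dissimilaritySet θ, |(θhat - θ) q| := by
  classical
  set t : κ → ℝ := fun m => ∑ j, if (m, j) ∈ dissimilaritySet θ then |(θhat - θ) (m, j)| else 0
  have ht : ∀ m, 0 ≤ t m := fun m => sum_nonneg fun j _ => by positivity
  have hrow : ∀ m m', ∑ j, (|θ (m, j) - θ (m', j)| - |θhat (m, j) - θhat (m', j)|) ≤ t m + t m' := by
    intro m m'
    rw [← sum_add_distrib]
    refine sum_le_sum fun j _ => ?_
    by_cases hj : θ (m, j) = θ (m', j)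
    · rw [hj, sub_self, abs_zero, zero_sub]
      have hnonneg : ∀ q, 0 ≤ if q ∈ dissimilaritySet θ then |(θhat - θ) q| else 0 := fun q => by
        positivity
      linarith [hnonneg (m, j), hnonneg (m', j), abs_nonneg (θhat (m, j) - θhat (m', j))]
    · have hm : (m, j) ∈ dissimilaritySet θ :=
        mem_filter.mpr ⟨mem_univ _, m', hj⟩
      have hm' : (m', j) ∈ dissimilaritySet θ :=
        mem_filter.mpr ⟨mem_univ _, m, Ne.symm hj⟩
      rw [if_pos hm, if_pos hm', PiLp.sub_apply, PiLp.sub_apply]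
      exact abs_sub_sub_abs_sub_le _ _ _ _
  calc fusionPenalty w θ - fusionPenalty w θhat
      ≤ ∑ m, ∑ m' ∈ univ.filter (m < ·), w m m' * (t m + t m') := by
        simp only [fusionPenalty, ← sum_sub_distrib, ← mul_sub]
        gcongr with m _ m' hm'
        · exact hw_nonneg m m' (mem_filter.mp hm').2.ne
        · exact hrow m m'
    _ = ∑ m, (∑ m' ∈ univ.filter (· ≠ m), w m m') * t m := sum_sum_lt_mul_add_eq hw_symm t
    _ ≤ ∑ m, φ * t m := by gcongr with m; exact hφ m
    _ = φ * ∑ q ∈ dissimilaritySet θ, |(θhat - θ) q| := by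
        rw [← mul_sum, ← univ_inter (dissimilaritySet θ), ← sum_ite_mem, Fintype.sum_prod_type]

theorem mul_norm_sub_sq_le_of_penalized_le {L : EuclideanSpace ℝ (κ × ι) → ℝ}
    {w : κ → κ → ℝ} (hw_nonneg : ∀ m m', m ≠ m' → 0 ≤ w m m') (hw_symm : ∀ m m', w m m' = w m' m)
    {φ : ℝ} (hφ : ∀ m, ∑ m' ∈ univ.filter (· ≠ m), w m m' ≤ φ)
    {ρ₁ ρ₂ η : ℝ} (hρ₁ : 0 ≤ ρ₁) (hρ₂ : 0 ≤ ρ₂) {g θ θhat : EuclideanSpace ℝ (κ × ι)}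
    (hmin : L θhat + (ρ₁ * ∑ q, |θhat q| + ρ₂ * fusionPenalty w θhat)
      ≤ L θ + (ρ₁ * ∑ q, |θ q| + ρ₂ * fusionPenalty w θ))
    (hg : ∀ q, 2 * |g q| ≤ ρ₁)
    (hRSC : η * ‖θhat - θ‖ ^ 2 ≤ L θhat - L θ - inner ℝ g (θhat - θ)) :
    η * ‖θhat - θ‖ ^ 2 ≤ 3 / 2 * ρ₁ * ∑ q ∈ univ.filter (θ · ≠ 0), |(θhat - θ) q|
      + ρ₂ * φ * ∑ q ∈ dissimilaritySet θ, |(θhat - θ) q| := by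
  have hinner : -inner ℝ g (θhat - θ) ≤ ρ₁ / 2 * ∑ q, |(θhat - θ) q| :=
    (neg_le_abs _).trans (abs_inner_le_mul_sum_abs (fun q => by linarith [hg q]) _)
  have hsplit := sum_filter_add_sum_filter_not univ (θ · ≠ 0) fun q => |(θhat - θ) q|
  have hoff : 0 ≤ ∑ q ∈ univ.filter (¬θ · ≠ 0), |(θhat - θ) q| := sum_nonneg fun q _ => abs_nonneg _
  have hl1 := mul_le_mul_of_nonneg_left (sum_abs_sub_sum_abs_le θ θhat) hρ₁
  have hfus := mul_le_mul_of_nonneg_left (fusionPenalty_sub_le hw_nonneg hw_symm hφ θ θhat) hρ₂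
  simp only [not_not] at hsplit hoff
  nlinarith [mul_nonneg hρ₁ hoff]

theorem norm_sub_le_of_penalized_le {L : EuclideanSpace ℝ (κ × ι) → ℝ}
    {w : κ → κ → ℝ} (hw_nonneg : ∀ m m', m ≠ m' → 0 ≤ w m m') (hw_symm : ∀ m m', w m m' = w m' m)
    {φ : ℝ} (hφ0 : 0 ≤ φ) (hφ : ∀ m, ∑ m' ∈ univ.filter (· ≠ m), w m m' ≤ φ)
    {ρ₁ ρ₂ η : ℝ} (hρ₁ : 0 ≤ ρ₁) (hρ₂ : 0 ≤ ρ₂) (hη : 0 < η) {g θ θhat : EuclideanSpace ℝ (κ × ι)}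
    (hmin : L θhat + (ρ₁ * ∑ q, |θhat q| + ρ₂ * fusionPenalty w θhat)
      ≤ L θ + (ρ₁ * ∑ q, |θ q| + ρ₂ * fusionPenalty w θ))
    (hg : ∀ q, 2 * |g q| ≤ ρ₁)
    (hRSC : η * ‖θhat - θ‖ ^ 2 ≤ L θhat - L θ - inner ℝ g (θhat - θ)) :
    ‖θhat - θ‖ ≤ (3 / 2 * ρ₁ * √(#(univ.filter (θ · ≠ 0)) : ℝ)
      + ρ₂ * φ * √(#(dissimilaritySet θ) : ℝ)) / η := by
  refine le_div_of_mul_sq_le_mul (norm_nonneg _) (by positivity) hη ?_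
  calc η * ‖θhat - θ‖ ^ 2
      ≤ 3 / 2 * ρ₁ * ∑ q ∈ univ.filter (θ · ≠ 0), |(θhat - θ) q|
        + ρ₂ * φ * ∑ q ∈ dissimilaritySet θ, |(θhat - θ) q| :=
        mul_norm_sub_sq_le_of_penalized_le hw_nonneg hw_symm hφ hρ₁ hρ₂ hmin hg hRSC
    _ ≤ 3 / 2 * ρ₁ * (√(#(univ.filter (θ · ≠ 0)) : ℝ) * ‖θhat - θ‖)
        + ρ₂ * φ * (√(#(dissimilaritySet θ) : ℝ) * ‖θhat - θ‖) := by
        gcongr <;> exact sum_abs_le_sqrt_card_mul_norm _ _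
    _ = _ := by ring

end Fusion

open Classical in
/-- Coefficients are indexed by `Fin M × Fin p`, with `x (m, j)` the `j`-th coefficient of
experiment `m`. -/
theorem joint_estimation_error_bound_general
    (M p dstar rstar : ℕ) (hM : 0 < M)
    (L : EuclideanSpace ℝ (Fin M × Fin p) → ℝ)
    (w : Fin M → Fin M → ℝ)
    (hw_nonneg : ∀ m m' : Fin M, m ≠ m' → 0 ≤ w m m')
    (hw_symm : ∀ m m' : Fin M, w m m' = w m' m)
    (ρ₁ ρ₂ η : ℝ) (hρ₂ : 0 < ρ₂) (hρ₁ : ρ₁ = ρ₂ / Real.sqrt M) (hη : 0 < η)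
    (θ θhat : EuclideanSpace ℝ (Fin M × Fin p))
    (hScard : (Finset.univ.filter (fun q : Fin M × Fin p => θ q ≠ 0)).card ≤ dstar * M)
    (hStcard : (Finset.univ.filter
        (fun q : Fin M × Fin p => ∃ m' : Fin M, θ q ≠ θ (m', q.2))).card ≤ rstar)
    (hmin : L θhat + (ρ₁ * (∑ q, |θhat q|)
          + ρ₂ * ∑ m : Fin M, ∑ m' ∈ Finset.univ.filter (fun m' => m < m'),
              w m m' * (∑ j, |θhat (m, j) - θhat (m', j)|))
        ≤ L θ + (ρ₁ * (∑ q, |θ q|)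
          + ρ₂ * ∑ m : Fin M, ∑ m' ∈ Finset.univ.filter (fun m' => m < m'),
              w m m' * (∑ j, |θ (m, j) - θ (m', j)|)))
    (hgrad : ∀ q, 2 * |gradient L θ q| ≤ ρ₁)
    (hRSC : η * ‖θhat - θ‖ ^ 2
        ≤ L θhat - L θ - (inner ℝ (gradient L θ) (θhat - θ) : ℝ)) :
    ‖θhat - θ‖ ≤ (ρ₂ / η) *
      (3 * Real.sqrt dstar
        + 2 * (Finset.univ.sup' (Finset.univ_nonempty_iff.mpr ⟨⟨0, hM⟩⟩)
            (fun m => ∑ m' ∈ Finset.univ.filter (fun m' => m' ≠ m), w m m'))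
          * Real.sqrt rstar) := by
  set φ := univ.sup' _ fun m => ∑ m' ∈ univ.filter (· ≠ m), w m m'
  have hφ : ∀ m, ∑ m' ∈ univ.filter (· ≠ m), w m m' ≤ φ := fun m =>
    le_sup' (fun m => ∑ m' ∈ univ.filter (· ≠ m), w m m') (mem_univ m)
  have hφ0 : 0 ≤ φ :=
    (sum_nonneg fun m' hm' => hw_nonneg _ _ (mem_filter.mp hm').2.symm).trans (hφ ⟨0, hM⟩)
  have hρ₁M : ρ₁ * √M = ρ₂ := by
    rw [hρ₁, div_mul_cancel₀ _ (Real.sqrt_pos.mpr (by exact_mod_cast hM)).ne']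
  have hρ₁0 : 0 ≤ ρ₁ := hρ₁ ▸ by positivity
  have hS : √(#(univ.filter (θ · ≠ 0)) : ℝ) ≤ √dstar * √M := by
    rw [← Real.sqrt_mul (Nat.cast_nonneg _)]
    exact Real.sqrt_le_sqrt (by exact_mod_cast hScard)
  have hSt : √(#(dissimilaritySet θ) : ℝ) ≤ √rstar := by
    -- `hStcard` decides `∃ m', _` by another instance, so it matches `dissimilaritySet` only up to `convert`.
    have hcard : #(dissimilaritySet θ) ≤ rstar := by unfold dissimilaritySet; convert hStcard
    exact Real.sqrt_le_sqrt (by exact_mod_cast hcard)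
  calc ‖θhat - θ‖
      ≤ (3 / 2 * ρ₁ * √(#(univ.filter (θ · ≠ 0)) : ℝ) + ρ₂ * φ * √(#(dissimilaritySet θ) : ℝ)) / η :=
        norm_sub_le_of_penalized_le hw_nonneg hw_symm hφ0 hφ hρ₁0 hρ₂.le hη
          hmin hgrad hRSC
    _ ≤ (3 / 2 * ρ₁ * (√dstar * √M) + ρ₂ * φ * √rstar) / η := by gcongr
    _ = ρ₂ / η * (3 / 2 * √dstar + φ * √rstar) := by rw [← hρ₁M]; ring
    _ ≤ ρ₂ / η * (3 * √dstar + 2 * φ * √rstar) := by gcongr <;> linarith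

open Classical in
/-- Deterministic core of Theorem 1 (joint estimation error bound
for multi-experiment networks). Coefficients are indexed by `Fin M × Fin p`,
with `x (m, j)` the `j`-th coefficient of experiment `m`. -/
theorem joint_estimation_error_bound
    (M p dstar rstar : ℕ) (hM : 0 < M)
    (L : EuclideanSpace ℝ (Fin M × Fin p) → ℝ)
    (hconv : ConvexOn ℝ Set.univ L) (hdiff : Differentiable ℝ L)
    (w : Fin M → Fin M → ℝ)
    (hw_nonneg : ∀ m m' : Fin M, m ≠ m' → 0 ≤ w m m')
    (hw_symm : ∀ m m' : Fin M, w m m' = w m' m)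
    (ρ₁ ρ₂ η : ℝ) (hρ₂ : 0 < ρ₂) (hρ₁ : ρ₁ = ρ₂ / Real.sqrt M) (hη : 0 < η)
    (θ θhat : EuclideanSpace ℝ (Fin M × Fin p))
    (hScard : (Finset.univ.filter (fun q : Fin M × Fin p => θ q ≠ 0)).card ≤ dstar * M)
    (hStcard : (Finset.univ.filter
        (fun q : Fin M × Fin p => ∃ m' : Fin M, θ q ≠ θ (m', q.2))).card ≤ rstar)
    (hmin : L θhat + (ρ₁ * (∑ q, |θhat q|)
          + ρ₂ * ∑ m : Fin M, ∑ m' ∈ Finset.univ.filter (fun m' => m < m'),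
              w m m' * (∑ j, |θhat (m, j) - θhat (m', j)|))
        ≤ L θ + (ρ₁ * (∑ q, |θ q|)
          + ρ₂ * ∑ m : Fin M, ∑ m' ∈ Finset.univ.filter (fun m' => m < m'),
              w m m' * (∑ j, |θ (m, j) - θ (m', j)|)))
    (hgrad : ∀ q, 2 * |gradient L θ q| ≤ ρ₁)
    (hRSC : η * ‖θhat - θ‖ ^ 2
        ≤ L θhat - L θ - (inner ℝ (gradient L θ) (θhat - θ) : ℝ)) :
    ‖θhat - θ‖ ≤ (ρ₂ / η) *
      (3 * Real.sqrt dstar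
        + 2 * (Finset.univ.sup' (Finset.univ_nonempty_iff.mpr ⟨⟨0, hM⟩⟩)
            (fun m => ∑ m' ∈ Finset.univ.filter (fun m' => m' ≠ m), w m m'))
          * Real.sqrt rstar) :=
  joint_estimation_error_bound_general M p dstar rstar hM L w hw_nonneg hw_symm ρ₁ ρ₂ η hρ₂ hρ₁ hη θ
    θhat hScard hStcard hmin hgrad hRSC
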